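/- Let r ≥ 2 be a natural number, let the cyclic group ℤ/rℤ act on itself by translation, and fix i ∈ ℤ/rℤ. If W is a ℂ[ℤ/rℤ]-submodule of the standard representation (the sum-zero subspace {v : ℤ/rℤ → ℂ | Σ_x v(x) = 0} of the permutation representation) such that every v ∈ W satisfies v(i) = v(i + 1), then W = 0. In other words, the only subrepresentation of the standard representation of ℤ/rℤ contained in the diagonal hyperplane {v | v(i) = v(i+1)} is zero. -/

import Mathlib

open scoped BigOperators

noncomputable section

variable (G X : Type*) [Group G] [MulAction G X]

/-- The permutation representation of `G` on functions `X → ℂ`:  `(g • v) x = v (g⁻¹ • x)`. -/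
def permRep : Representation ℂ G (X → ℂ) where
  toFun g := LinearMap.funLeft ℂ ℂ (fun x => g⁻¹ • x)
  map_one' := by ext v x; simp [LinearMap.funLeft]
  map_mul' g h := by ext v x; simp [LinearMap.funLeft, mul_smul]

/-- The module structure on `X → ℂ` over the group algebra `ℂ[G]` induced by the
permutation representation. -/
instance permModule : Module (MonoidAlgebra ℂ G) (X → ℂ) :=
  Module.compHom _ ((permRep G X).asAlgebraHom).toRingHom

/-- The standard representation: the sum-zero subspace
`{v : X → ℂ | ∑ x, v x = 0}` of the permutation representation, as a submodule over the
group algebra `ℂ[G]`. -/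
def stdRep [Fintype X] : Submodule (MonoidAlgebra ℂ G) (X → ℂ) where
  carrier := {v : X → ℂ | ∑ x, v x = 0}
  zero_mem' := by simp
  add_mem' := by
    intro a b ha hb
    simp only [Set.mem_setOf_eq, Pi.add_apply, Finset.sum_add_distrib] at *
    rw [ha, hb, add_zero]
  smul_mem' := by
    classical
    intro r v hv
    show ∑ x, ((permRep G X).asAlgebraHom r v) x = 0
    rw [Representation.asAlgebraHom_def, MonoidAlgebra.lift_apply, Finsupp.sum]
    simp only [LinearMap.coe_sum, Finset.sum_apply, LinearMap.smul_apply, Pi.smul_apply,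
      smul_eq_mul]
    rw [Finset.sum_comm]
    have hfix : ∀ g : G, ∑ x, ((permRep G X) g v) x = 0 := by
      intro g
      have : ∀ x, ((permRep G X) g v) x = v (g⁻¹ • x) := fun x => rfl
      simp only [this]
      have := Equiv.sum_comp (MulAction.toPerm (g⁻¹ : G)) v
      exact this.trans hv
    calc ∑ g ∈ r.coeff.support, ∑ x, r.coeff g * ((permRep G X) g v) x
        = ∑ g ∈ r.coeff.support, r.coeff g * ∑ x, ((permRep G X) g v) x := by
          simp [Finset.mul_sum]
      _ = 0 := by simp [hfix]

section

variable {G X}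

theorem permRep_apply (g : G) (v : X → ℂ) (x : X) : permRep G X g v x = v (g⁻¹ • x) := rfl

theorem single_one_smul_eq_permRep (g : G) (v : X → ℂ) :
    (MonoidAlgebra.single g (1 : ℂ)) • v = permRep G X g v :=
  LinearMap.congr_fun (Representation.asAlgebraHom_single_one (permRep G X) g) v

theorem apply_smul_eq_of_forall_mem {W : Submodule (MonoidAlgebra ℂ G) (X → ℂ)} {q q' : X}
    (hdiag : ∀ v ∈ W, v q = v q') {v : X → ℂ} (hv : v ∈ W) (g : G) :
    v (g • q) = v (g • q') := by
  have := hdiag _ (W.smul_mem (MonoidAlgebra.single g⁻¹ 1) hv)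
  simpa only [single_one_smul_eq_permRep, permRep_apply, inv_inv] using this

end

theorem ZMod.apply_eq_apply_zero_of_forall_apply_add_one {n : ℕ} {α : Type*} {f : ZMod n → α}
    (h : ∀ j, f (j + 1) = f j) (x : ZMod n) : f x = f 0 := by
  obtain ⟨k, rfl⟩ := ZMod.intCast_surjective x
  induction k using Int.induction_on with
  | zero => simp
  | succ k ih => push_cast at ih ⊢; rw [h, ih]
  | pred k ih => push_cast at ih ⊢; rw [← ih, ← h, sub_add_cancel]

theorem Fintype.eq_zero_of_sum_eq_zero_of_forall_eq {X K : Type*} [Fintype X] [Nonempty X]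
    [Field K] [CharZero K] {v : X → K} {c : K} (hconst : ∀ x, v x = c)
    (hsum : ∑ x, v x = 0) : c = 0 := by
  simp only [hconst, Finset.sum_const, Finset.card_univ, nsmul_eq_mul] at hsum
  exact (mul_eq_zero.mp hsum).resolve_left (Nat.cast_ne_zero.mpr Fintype.card_ne_zero)

theorem cyclic_standardRep_diagonal_subrep_eq_bot_general (r : ℕ) [NeZero r]
    (i : ZMod r)
    (W : Submodule (MonoidAlgebra ℂ (Multiplicative (ZMod r)))
      (Multiplicative (ZMod r) → ℂ))
    (hWS : W ≤ stdRep (Multiplicative (ZMod r)) (Multiplicative (ZMod r)))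
    (hdiag : ∀ v ∈ W, v (Multiplicative.ofAdd i) = v (Multiplicative.ofAdd (i + 1))) :
    W = ⊥ := by
  refine (Submodule.eq_bot_iff W).mpr fun v hv => ?_
  have hstep (j : ZMod r) : v (Multiplicative.ofAdd (j + 1)) = v (Multiplicative.ofAdd j) := by
    have := apply_smul_eq_of_forall_mem hdiag hv (Multiplicative.ofAdd (j - i))
    simp only [smul_eq_mul, ← ofAdd_add, sub_add_cancel, ← add_assoc] at this
    exact this.symm
  have hconst (x : Multiplicative (ZMod r)) : v x = v (Multiplicative.ofAdd 0) :=
    ZMod.apply_eq_apply_zero_of_forall_apply_add_one (f := v ∘ Multiplicative.ofAdd) hstep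
      x.toAdd
  have hzero := Fintype.eq_zero_of_sum_eq_zero_of_forall_eq hconst (hWS hv)
  funext x
  rw [hconst x, hzero, Pi.zero_apply]

/-- Let `r ≥ 2`, let the cyclic group `ℤ/rℤ` act on itself by translation (written
multiplicatively via `Multiplicative (ZMod r)`, so that `g • x = g + x`), and fix
`i ∈ ℤ/rℤ`.  If `W` is a `ℂ[ℤ/rℤ]`-submodule of the standard representation (the sum-zero
subspace of the permutation representation) such that every `v ∈ W` satisfies
`v i = v (i + 1)`, then `W = 0`: the only subrepresentation of the standard representation
contained in the diagonal `Δ_{i, i+1}` is zero. -/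
theorem cyclic_standardRep_diagonal_subrep_eq_bot (r : ℕ) [NeZero r] (hr : 2 ≤ r)
    (i : ZMod r)
    (W : Submodule (MonoidAlgebra ℂ (Multiplicative (ZMod r)))
      (Multiplicative (ZMod r) → ℂ))
    (hWS : W ≤ stdRep (Multiplicative (ZMod r)) (Multiplicative (ZMod r)))
    (hdiag : ∀ v ∈ W, v (Multiplicative.ofAdd i) = v (Multiplicative.ofAdd (i + 1))) :
    W = ⊥ :=
  cyclic_standardRep_diagonal_subrep_eq_bot_general r i W hWS hdiag

end
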